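/- Let g : Δ → ℝ with finite Lipschitz norm ‖g‖ on a metric measure space, and let h ∈ C (the cone) with ∫ h dm̃ = 1 and cone constants a, b, c > 2·max(sup indicators). Suppose R ≥ K₁‖g‖ where K₁ = 2·max(D + a·c₀, 1 + b·c₀, 1 + c·c₀). Then g + R·h satisfies each linear cone inequality: for each atom P, 0 ≤ (1/μ(P))∫_P (g + Rh) dm̃ ≤ a∫(g+Rh) dm̃; |g+Rh|_d ≤ b∫(g+Rh)dm̃; sup_B|g+Rh| ≤ c∫(g+Rh)dm̃ — provided the 'gap' denominators a−1, b−|h|_d, c−sup|h| are each ≥ 1/2 and the atom-average bounds (1/μ(P))∫_P·dm̃ ≤ D‖·‖_∞ and ∫·dm̃ ≤ c₀‖·‖_∞ hold. (Reproducing property of the cone: every g can be pushed into the cone by adding K₁‖g‖·h.) -/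
import Mathlib


open MeasureTheory

set_option maxHeartbeats 1000000 in
theorem stmt_17 {Δ : Type*} [MeasurableSpace Δ] [MetricSpace Δ]
    (mt μ : Measure Δ) (n : ℕ) (P : Fin n → Set Δ) (B : Set Δ)
    (a b c D c₀ Lh Sh Gsup Glip R : ℝ) (h g : Δ → ℝ)
    (hc₀ : 0 ≤ c₀) (hD : 0 ≤ D) (hLh : 0 ≤ Lh) (hSh : 0 ≤ Sh)
    (hGsup : 0 ≤ Gsup) (hGlip : 0 ≤ Glip)
    (hInth : Integrable h mt) (hIntg : Integrable g mt)
    (hnorm : ∫ x, h x ∂mt = 1)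
    (havg : ∀ i, (μ (P i)).toReal⁻¹ * ∫ x in P i, h x ∂mt = 1)
    (hhLip : ∀ x y, |h x - h y| ≤ Lh * dist x y)
    (hhSup : ∀ x, |h x| ≤ Sh)
    (hgapa : 1 / 2 ≤ a - 1) (hgapb : 1 / 2 ≤ b - Lh) (hgapc : 1 / 2 ≤ c - Sh)
    (hgSup : ∀ x, |g x| ≤ Gsup)
    (hgLip : ∀ x y, |g x - g y| ≤ Glip * dist x y)
    (hgavg : ∀ i, |(μ (P i)).toReal⁻¹ * ∫ x in P i, g x ∂mt| ≤ D * Gsup)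
    (hgint : |∫ x, g x ∂mt| ≤ c₀ * Gsup)
    (hR : R = 2 * max (D + a * c₀) (max (1 + b * c₀) (1 + c * c₀)) * (Gsup + Glip)) :
    (∀ i, 0 ≤ (μ (P i)).toReal⁻¹ * ∫ x in P i, (g x + R * h x) ∂mt ∧
        (μ (P i)).toReal⁻¹ * (∫ x in P i, (g x + R * h x) ∂mt) ≤
          a * ∫ x, (g x + R * h x) ∂mt) ∧
    (∀ x y, |(g x + R * h x) - (g y + R * h y)| ≤
        (b * ∫ x, (g x + R * h x) ∂mt) * dist x y) ∧
    (∀ x ∈ B, |g x + R * h x| ≤ c * ∫ x, (g x + R * h x) ∂mt) ∧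
    |R| ≤ 2 * max (D + a * c₀) (max (1 + b * c₀) (1 + c * c₀)) * (Gsup + Glip) := by
  have ha0 : (0:ℝ) ≤ a := by linarith
  have hb0 : (0:ℝ) ≤ b := by linarith
  have hc0 : (0:ℝ) ≤ c := by linarith
  obtain ⟨K, hKdef⟩ : ∃ K, K = 2 * max (D + a * c₀) (max (1 + b * c₀) (1 + c * c₀)) := ⟨_, rfl⟩
  rw [← hKdef] at hR
  have hK1 : 2 * (D + a * c₀) ≤ K := by
    have := le_max_left (D + a * c₀) (max (1 + b * c₀) (1 + c * c₀)); linarith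
  have hK2 : 2 * (1 + b * c₀) ≤ K := by
    have h1 := le_max_right (D + a * c₀) (max (1 + b * c₀) (1 + c * c₀))
    have h2 := le_max_left (1 + b * c₀) (1 + c * c₀); linarith
  have hK3 : 2 * (1 + c * c₀) ≤ K := by
    have h1 := le_max_right (D + a * c₀) (max (1 + b * c₀) (1 + c * c₀))
    have h2 := le_max_right (1 + b * c₀) (1 + c * c₀); linarith
  have hbc : (0:ℝ) ≤ b * c₀ := mul_nonneg hb0 hc₀
  have hcc : (0:ℝ) ≤ c * c₀ := mul_nonneg hc0 hc₀
  have hKnn : (0:ℝ) ≤ K := by linarith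
  have hRnn : 0 ≤ R := by rw [hR]; positivity
  have hRK1 : 2 * (D + a * c₀) * (Gsup + Glip) ≤ R := by
    rw [hR]; exact mul_le_mul_of_nonneg_right hK1 (by linarith)
  have hRK2 : 2 * (1 + b * c₀) * (Gsup + Glip) ≤ R := by
    rw [hR]; exact mul_le_mul_of_nonneg_right hK2 (by linarith)
  have hRK3 : 2 * (1 + c * c₀) * (Gsup + Glip) ≤ R := by
    rw [hR]; exact mul_le_mul_of_nonneg_right hK3 (by linarith)
  have hInt : ∫ x, (g x + R * h x) ∂mt = (∫ x, g x ∂mt) + R := by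
    rw [integral_add hIntg (hInth.const_mul R), integral_const_mul, hnorm, mul_one]
  have hIabs := abs_le.mp hgint
  refine ⟨?_, ?_, ?_, ?_⟩
  · intro i
    have hPi : (μ (P i)).toReal⁻¹ * ∫ x in P i, (g x + R * h x) ∂mt
        = (μ (P i)).toReal⁻¹ * (∫ x in P i, g x ∂mt) + R := by
      rw [integral_add hIntg.integrableOn ((hInth.const_mul R).integrableOn), integral_const_mul,
        mul_add]
      rw [show (μ (P i)).toReal⁻¹ * (R * ∫ x in P i, h x ∂mt)
          = R * ((μ (P i)).toReal⁻¹ * ∫ x in P i, h x ∂mt) by ring, havg i, mul_one]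
    have hAi := abs_le.mp (hgavg i)
    constructor
    · rw [hPi]
      nlinarith [mul_nonneg hD hGlip, mul_nonneg ha0 (mul_nonneg hc₀ hGsup),
        mul_nonneg ha0 (mul_nonneg hc₀ hGlip), mul_nonneg hD hGsup]
    · rw [hPi, hInt]
      have h1 : a * -(c₀ * Gsup) ≤ a * ∫ x, g x ∂mt :=
        mul_le_mul_of_nonneg_left hIabs.1 ha0
      have h2 : (1/2) * R ≤ (a - 1) * R := mul_le_mul_of_nonneg_right hgapa hRnn
      nlinarith [mul_nonneg hD hGlip, mul_nonneg ha0 (mul_nonneg hc₀ hGlip)]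
  · intro x y
    have h1 : |(g x + R * h x) - (g y + R * h y)| ≤ (Glip + R * Lh) * dist x y := by
      calc |(g x + R * h x) - (g y + R * h y)| = |(g x - g y) + R * (h x - h y)| := by ring_nf
        _ ≤ |g x - g y| + |R * (h x - h y)| := abs_add_le _ _
        _ = |g x - g y| + R * |h x - h y| := by rw [abs_mul, abs_of_nonneg hRnn]
        _ ≤ Glip * dist x y + R * (Lh * dist x y) := by
            gcongr
            exacts [hgLip x y, hhLip x y]
        _ = (Glip + R * Lh) * dist x y := by ring
    refine h1.trans ?_
    rw [hInt]
    have hkey : Glip + R * Lh ≤ b * ((∫ x, g x ∂mt) + R) := by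
      have h2 : b * -(c₀ * Gsup) ≤ b * ∫ x, g x ∂mt :=
        mul_le_mul_of_nonneg_left hIabs.1 hb0
      have h3 : (1/2) * R ≤ (b - Lh) * R := mul_le_mul_of_nonneg_right hgapb hRnn
      nlinarith [mul_nonneg hbc hGlip]
    exact mul_le_mul_of_nonneg_right hkey dist_nonneg
  · intro x _
    have h1 : |g x + R * h x| ≤ Gsup + R * Sh := by
      calc |g x + R * h x| ≤ |g x| + |R * h x| := abs_add_le _ _
        _ = |g x| + R * |h x| := by rw [abs_mul, abs_of_nonneg hRnn]
        _ ≤ Gsup + R * Sh := by gcongr; exacts [hgSup x, hhSup x]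
    refine h1.trans ?_
    rw [hInt]
    have h2 : c * -(c₀ * Gsup) ≤ c * ∫ x, g x ∂mt :=
      mul_le_mul_of_nonneg_left hIabs.1 hc0
    have h3 : (1/2) * R ≤ (c - Sh) * R := mul_le_mul_of_nonneg_right hgapc hRnn
    nlinarith [mul_nonneg hcc hGlip]
  · rw [abs_of_nonneg hRnn, hR, hKdef]
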